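/- There exists a bi-additive map κ : L × L → kˣ such that κ(λ,λ) = 1 for all λ ∈ L and κ(λ,μ)² = ε(λ,μ) for all λ, μ ∈ L. (Consequently κ also satisfies κ(λ,μ)·κ(μ,λ) = 1.) -/

import Mathlib

/-!
Trivial diagonal already forces `ε a b * ε b a = 1`, so `ε` is determined by its values
`ε (e i) (e j)`, `i < j`, on a basis. Let `F` be the bi-additive map taking square roots of
these values above the diagonal and `1` elsewhere; then `κ a b = F a b / F b a` is alternating
by construction, and its square agrees with `ε` on basis pairs.
-/

open Module

theorem LinearMap.exists_isAlt_two_nsmul_eq {R M N : Type*} [CommSemiring R] [AddCommMonoid M]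
    [Module R M] [Free R M] [AddCommGroup N] [Module R N] {B : M →ₗ[R] M →ₗ[R] N}
    (hB : B.IsAlt) (hN : ∀ y : N, ∃ z, 2 • z = y) :
    ∃ K : M →ₗ[R] M →ₗ[R] N, K.IsAlt ∧ 2 • K = B := by
  let b := Free.chooseBasis R M
  let _ : LinearOrder (Free.ChooseBasisIndex R M) := IsWellOrder.linearOrder WellOrderingRel
  choose s hs using fun i j => hN (B (b i) (b j))
  let F : M →ₗ[R] M →ₗ[R] N :=
    b.constr R fun i => b.constr R fun j => if i < j then s i j else 0
  refine ⟨F - F.flip, fun x => sub_self (F x x), LinearMap.ext_basis b b fun i j => ?_⟩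
  rcases lt_trichotomy i j with h | rfl | h
  · simp [F, h, h.not_gt, hs]
  · simp [F, hB (b i)]
  · simp [F, h, h.not_gt, hs, ← hB.neg (b j)]

theorem Units.exists_sq_eq_of_isAlgClosed {k : Type*} [Field k] [IsAlgClosed k] (u : kˣ) :
    ∃ v : kˣ, v ^ 2 = u := by
  obtain ⟨z, hz⟩ := IsAlgClosed.exists_eq_mul_self (u : k)
  have hz0 : z ≠ 0 := by rintro rfl; simp at hz
  exact ⟨Units.mk0 z hz0, Units.ext (by simp [hz, sq])⟩

theorem exists_alternating_square_root_general
    {k : Type*} [Field k] [IsAlgClosed k]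
    {L : Type*} [AddCommGroup L] [Module.Free ℤ L]
    (ε : L → L → kˣ)
    (hadd1 : ∀ a b c : L, ε (a + b) c = ε a c * ε b c)
    (hadd2 : ∀ a b c : L, ε a (b + c) = ε a b * ε a c)
    (hdiag : ∀ a : L, ε a a = 1) :
    ∃ κ : L → L → kˣ,
      (∀ a b c : L, κ (a + b) c = κ a c * κ b c) ∧
      (∀ a b c : L, κ a (b + c) = κ a b * κ a c) ∧
      (∀ a : L, κ a a = 1) ∧
      (∀ a b : L, κ a b ^ 2 = ε a b) ∧
      (∀ a b : L, κ a b * κ b a = 1) := by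
  let B : L →ₗ[ℤ] L →ₗ[ℤ] Additive kˣ :=
    (AddMonoidHom.mk'
      (fun a => (AddMonoidHom.mk' (fun c => .ofMul (ε a c)) (hadd2 a)).toIntLinearMap)
      fun a b => LinearMap.ext (hadd1 a b)).toIntLinearMap
  have hsqrt (y : Additive kˣ) : ∃ z, 2 • z = y := by
    obtain ⟨v, hv⟩ := y.toMul.exists_sq_eq_of_isAlgClosed
    exact ⟨.ofMul v, congrArg Additive.ofMul hv⟩
  obtain ⟨K, hK, hKB⟩ := LinearMap.exists_isAlt_two_nsmul_eq (B := B) hdiag hsqrt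
  refine ⟨fun a b => (K a b).toMul, fun a b c => ?_, fun a b c => ?_, fun a => ?_, fun a b => ?_,
    fun a b => ?_⟩
  · simp
  · simp
  · simp [hK a]
  · change ((2 • K) a b).toMul = ε a b
    rw [hKB]
    rfl
  · rw [← toMul_add, ← hK.neg, neg_add_cancel, toMul_zero]

/-- An alternating square root `κ` of a symmetric bi-additive `{±1}`-valued form `ε`
with trivial diagonal on a finitely generated free abelian group exists. -/
theorem exists_alternating_square_root
    {k : Type*} [Field k] [IsAlgClosed k]
    {L : Type*} [AddCommGroup L] [Module.Free ℤ L] [Module.Finite ℤ L]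
    (ε : L → L → kˣ)
    (hadd1 : ∀ a b c : L, ε (a + b) c = ε a c * ε b c)
    (hadd2 : ∀ a b c : L, ε a (b + c) = ε a b * ε a c)
    (hsymm : ∀ a b : L, ε a b = ε b a)
    (hval : ∀ a b : L, ε a b = 1 ∨ ε a b = -1)
    (hdiag : ∀ a : L, ε a a = 1) :
    ∃ κ : L → L → kˣ,
      (∀ a b c : L, κ (a + b) c = κ a c * κ b c) ∧
      (∀ a b c : L, κ a (b + c) = κ a b * κ a c) ∧
      (∀ a : L, κ a a = 1) ∧
      (∀ a b : L, κ a b ^ 2 = ε a b) ∧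
      (∀ a b : L, κ a b * κ b a = 1) :=
  exists_alternating_square_root_general ε hadd1 hadd2 hdiag
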